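/- Let $u_i, u_j, u_x, u_y, s_i, s_j, s_x, s_y$ be real numbers and $a_{ij} > 0$. Define $B_{pq} = \cosh(u_p-u_q)+\tfrac12 e^{u_p+u_q}(s_p-s_q)^2$ and the conductance $c^{xy}_{ij} = a_{ij} e^{u_i+u_j-u_x-u_y} B_{xy} / B_{ij}$. Then $(c^{xy}_{ij}/a_{ij})^{-1} \le 16\, B_{ix}^2 B_{jx}^2$, and similarly with $x$ replaced by $y$. -/

import Mathlib

/-!
Under `(u, s) ↦ s + i e^{-u}` the quantity `B_{pq}` is the hyperbolic cosine of the hyperbolic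
distance between the corresponding points of the upper half-plane. The triangle inequality and
`cosh (a + b) ≤ 2 cosh a cosh b` then give `B_{ij} ≤ 2 B_{ix} B_{jx}`, while `e^{v - u} ≤ 2 cosh (u - v)`
bounds each of `e^{u_x - u_i}`, `e^{u_x - u_j}` and `e^{u_y - u_x}` by twice the matching `B`.
-/

open Real UpperHalfPlane

noncomputable section

lemma Real.cosh_add_le_two_mul_cosh_mul_cosh (a b : ℝ) : cosh (a + b) ≤ 2 * cosh a * cosh b := by
  have := cosh_pos (a - b)
  rw [cosh_sub] at this
  rw [cosh_add]
  linarith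

lemma Real.exp_le_two_mul_cosh (x : ℝ) : exp x ≤ 2 * cosh x := by
  have := exp_pos (-x)
  rw [cosh_eq]
  linarith

lemma cosh_dist_le_two_mul_cosh_dist_mul_cosh_dist {X : Type*} [PseudoMetricSpace X] (x y z : X) :
    cosh (dist x z) ≤ 2 * cosh (dist x y) * cosh (dist y z) := by
  refine (cosh_le_cosh.2 ?_).trans (cosh_add_le_two_mul_cosh_mul_cosh _ _)
  rw [abs_of_nonneg dist_nonneg, abs_of_nonneg (by positivity)]
  exact dist_triangle x y z

/-- The paper's `B_{pq}` is `hypCosh u_p u_q s_p s_q`. -/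
def hypCosh (u v s t : ℝ) : ℝ :=
  cosh (u - v) + (1/2) * exp (u + v) * (s - t)^2

def halfPlanePoint (u s : ℝ) : ℍ :=
  ⟨⟨s, exp (-u)⟩, exp_pos _⟩

lemma cosh_dist_halfPlanePoint (u v s t : ℝ) :
    cosh (dist (halfPlanePoint u s) (halfPlanePoint v t)) = hypCosh u v s t := by
  rw [cosh_dist', hypCosh, cosh_eq]
  simp only [halfPlanePoint, UpperHalfPlane.re, UpperHalfPlane.im, exp_neg, exp_add, exp_sub]
  field_simp
  ring

lemma hypCosh_comm (u v s t : ℝ) : hypCosh u v s t = hypCosh v u t s := by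
  rw [hypCosh, hypCosh, ← cosh_neg, neg_sub, add_comm u, ← neg_sq, neg_sub]

lemma one_le_hypCosh (u v s t : ℝ) : 1 ≤ hypCosh u v s t :=
  cosh_dist_halfPlanePoint u v s t ▸ one_le_cosh _

lemma hypCosh_pos (u v s t : ℝ) : 0 < hypCosh u v s t :=
  one_pos.trans_le (one_le_hypCosh u v s t)

lemma exp_sub_le_two_mul_hypCosh (u v s t : ℝ) : exp (v - u) ≤ 2 * hypCosh u v s t := by
  calc exp (v - u) ≤ 2 * cosh (u - v) := by
        rw [← cosh_neg, neg_sub]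
        exact exp_le_two_mul_cosh _
    _ ≤ 2 * hypCosh u v s t := by
        rw [hypCosh]
        gcongr
        exact le_add_of_nonneg_right (by positivity)

lemma hypCosh_le_two_mul_hypCosh_mul_hypCosh (u v w s t r : ℝ) :
    hypCosh u w s r ≤ 2 * hypCosh u v s t * hypCosh w v r t := by
  simpa only [cosh_dist_halfPlanePoint, dist_comm (halfPlanePoint v t)] using
    cosh_dist_le_two_mul_cosh_dist_mul_cosh_dist (halfPlanePoint u s) (halfPlanePoint v t)
      (halfPlanePoint w r)

lemma hypCosh_mul_exp_div_hypCosh_le (ui uj ux uy si sj sx sy : ℝ) :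
    hypCosh ui uj si sj * exp (ux + uy - ui - uj) / hypCosh ux uy sx sy ≤
      16 * hypCosh ui ux si sx ^ 2 * hypCosh uj ux sj sx ^ 2 := by
  have hexp : exp (ux + uy - ui - uj) = exp (ux - ui) * exp (ux - uj) * exp (uy - ux) := by
    rw [← exp_add, ← exp_add]
    ring_nf
  have hix := (hypCosh_pos ui ux si sx).le
  have hjx := (hypCosh_pos uj ux sj sx).le
  rw [div_le_iff₀ (hypCosh_pos ux uy sx sy), hexp]
  calc hypCosh ui uj si sj * (exp (ux - ui) * exp (ux - uj) * exp (uy - ux))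
      ≤ (2 * hypCosh ui ux si sx * hypCosh uj ux sj sx) *
          ((2 * hypCosh ui ux si sx) * (2 * hypCosh uj ux sj sx) *
            (2 * hypCosh ux uy sx sy)) := by
        gcongr
        · exact hypCosh_le_two_mul_hypCosh_mul_hypCosh ..
        · exact exp_sub_le_two_mul_hypCosh ..
        · exact exp_sub_le_two_mul_hypCosh ..
        · exact exp_sub_le_two_mul_hypCosh ..
    _ = 16 * hypCosh ui ux si sx ^ 2 * hypCosh uj ux sj sx ^ 2 * hypCosh ux uy sx sy := by ring

end

/-- With `B_{pq} = cosh(u_p-u_q)+(1/2) e^{u_p+u_q}(s_p-s_q)^2` and conductance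
`c^{xy}_{ij} = a_{ij} e^{u_i+u_j-u_x-u_y} B_{xy}/B_{ij}`, one has
`(c^{xy}_{ij}/a_{ij})⁻¹ ≤ 16 B_{ix}² B_{jx}²`, and similarly with `x` replaced by `y`. -/
theorem stmt4 (ui uj ux uy si sj sx sy aij : ℝ) (haij : 0 < aij)
    (Bij Bxy Bix Bjx Biy Bjy cxyij : ℝ)
    (hBij : Bij = Real.cosh (ui - uj) + (1/2) * Real.exp (ui + uj) * (si - sj)^2)
    (hBxy : Bxy = Real.cosh (ux - uy) + (1/2) * Real.exp (ux + uy) * (sx - sy)^2)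
    (hBix : Bix = Real.cosh (ui - ux) + (1/2) * Real.exp (ui + ux) * (si - sx)^2)
    (hBjx : Bjx = Real.cosh (uj - ux) + (1/2) * Real.exp (uj + ux) * (sj - sx)^2)
    (hBiy : Biy = Real.cosh (ui - uy) + (1/2) * Real.exp (ui + uy) * (si - sy)^2)
    (hBjy : Bjy = Real.cosh (uj - uy) + (1/2) * Real.exp (uj + uy) * (sj - sy)^2)
    (hc : cxyij = aij * Real.exp (ui + uj - ux - uy) * Bxy / Bij) :
    (cxyij / aij)⁻¹ ≤ 16 * Bix^2 * Bjx^2 ∧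
    (cxyij / aij)⁻¹ ≤ 16 * Biy^2 * Bjy^2 := by
  have hinv : (cxyij / aij)⁻¹ = Bij * exp (ux + uy - ui - uj) / Bxy := by
    rw [hc, show ux + uy - ui - uj = -(ui + uj - ux - uy) by ring, exp_neg]
    field_simp
  rw [hinv, hBij, hBxy, hBix, hBjx, hBiy, hBjy]
  refine ⟨hypCosh_mul_exp_div_hypCosh_le ui uj ux uy si sj sx sy, ?_⟩
  have := hypCosh_mul_exp_div_hypCosh_le ui uj uy ux si sj sy sx
  rwa [hypCosh_comm uy, add_comm uy] at this
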